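/- In the polar Grassmann graph Γ_k(n) of the thin polar space Π_n with 1 ≤ k ≤ n−3 (vertices: (k+1)-element singular subsets), the maximal cliques are exactly the stars [S,U] = {X : S ⊆ X ⊆ U, |X| = k+1} with S singular of size k and U maximal singular (size n), and the tops ⟨U] = {X : X ⊆ U, |X| = k+1} with U singular of size k+2. -/

import Mathlib

open Finset

/-- The point set J = {±1, …, ±n} of the thin polar space Π_n. -/
noncomputable def polarJ (n : ℕ) : Finset ℤ := (Finset.Icc (-(n : ℤ)) (n : ℤ)).erase 0

/-- A subset of J is singular iff it contains no pair {i, -i}. -/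
def Sing (n : ℕ) (S : Finset ℤ) : Prop := S ⊆ polarJ n ∧ ∀ i ∈ S, -i ∉ S

/-- A clique of Γ_k(n), viewed as a family of (k+1)-element singular subsets. -/
def IsCliqueF (n k : ℕ) (C : Set (Finset ℤ)) : Prop :=
  (∀ X ∈ C, Sing n X ∧ X.card = k + 1) ∧
  ∀ X ∈ C, ∀ Y ∈ C, X ≠ Y → (X ∩ Y).card = k ∧ Sing n (X ∪ Y)

/-- A maximal clique of Γ_k(n). -/
def IsMaxCliqueF (n k : ℕ) (C : Set (Finset ℤ)) : Prop :=
  IsCliqueF n k C ∧ ∀ D : Set (Finset ℤ), IsCliqueF n k D → C ⊆ D → C = D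

/-!
Two distinct vertices X, Y of a clique meet in k points and span the (k+2)-set X ∪ Y. A member
W of the clique not inside X ∪ Y meets every member inside X ∪ Y in the same k-set W ∩ (X ∪ Y),
which is therefore X ∩ Y. Hence if some member Z misses a point of X ∩ Y, first Z and then
every member lies in X ∪ Y: a family of (k+1)-sets pairwise meeting in k points either has a
common k-set S or lies in a (k+2)-set. In the first case the union of a clique is singular and
extends to a maximal singular set U, so a maximal clique is the star [S,U]; in the second it is
the top ⟨X ∪ Y].

A vertex adjacent to all of [S,U] but missing some s ∈ S contains U \ {s}, too many points
since n ≥ k + 3; one containing S and a point z ∉ U is not adjacent to S ∪ {-z}, where -z ∈ U by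
maximality of U. A vertex Z adjacent to all of ⟨U] but not inside U meets every U \ {x} in
Z ∩ U, so Z ∩ U is empty, yet has k ≥ 1 points.
-/

lemma mem_polarJ {n : ℕ} {x : ℤ} : x ∈ polarJ n ↔ x ≠ 0 ∧ -(n : ℤ) ≤ x ∧ x ≤ n := by
  simp [polarJ]

lemma exists_mem_polarJ_of_card_lt {n : ℕ} {S : Finset ℤ} (hc : S.card < n) :
    ∃ j ∈ polarJ n, j ∉ S ∧ -j ∉ S := by
  obtain ⟨i, hi, hiS⟩ := exists_mem_notMem_of_card_lt_card
    (s := S.image fun x : ℤ => |x|) (t := Icc (1 : ℤ) n) (by simpa using card_image_le.trans_lt hc)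
  rw [mem_Icc] at hi
  refine ⟨i, mem_polarJ.2 (by omega), fun h => hiS ?_, fun h => hiS ?_⟩
  · exact mem_image.2 ⟨i, h, abs_of_pos (by omega)⟩
  · exact mem_image.2 ⟨-i, h, by rw [abs_neg, abs_of_pos (by omega)]⟩

namespace Sing

variable {n : ℕ} {S T : Finset ℤ}

lemma mono (hT : Sing n T) (h : S ⊆ T) : Sing n S :=
  ⟨h.trans hT.1, fun i hi hni => hT.2 i (h hi) (h hni)⟩

lemma empty (n : ℕ) : Sing n ∅ :=
  ⟨empty_subset _, fun _ h => absurd h (notMem_empty _)⟩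

lemma insert (hS : Sing n S) {j : ℤ} (hj : j ∈ polarJ n) (hnj : -j ∉ S) :
    Sing n (insert j S) := by
  refine ⟨insert_subset hj hS.1, fun i hi hni => ?_⟩
  have hj0 := (mem_polarJ.1 hj).1
  rcases mem_insert.1 hi with rfl | hi <;> rcases mem_insert.1 hni with h | hni
  · omega
  · exact hnj hni
  · exact hnj (h ▸ (neg_neg i).symm ▸ hi)
  · exact hS.2 i hi hni

lemma abs_mem_Icc (hS : Sing n S) {x : ℤ} (hx : x ∈ S) : |x| ∈ Icc (1 : ℤ) n := by
  have := mem_polarJ.1 (hS.1 hx)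
  rw [mem_Icc]
  rcases abs_cases x with ⟨h, _⟩ | ⟨h, _⟩ <;> omega

lemma card_le (hS : Sing n S) : S.card ≤ n := by
  have hinj : Set.InjOn (fun x : ℤ => |x|) S := by
    intro x hx y hy hxy
    rcases abs_eq_abs.1 hxy with h | h
    · exact h
    · exact absurd (h ▸ hx) (hS.2 y hy)
  simpa using card_le_card_of_injOn _ (fun x hx => hS.abs_mem_Icc hx) hinj

lemma exists_superset_card_eq (hS : Sing n S) : ∃ U, Sing n U ∧ S ⊆ U ∧ U.card = n := by
  induction hd : n - S.card generalizing S with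
  | zero => exact ⟨S, hS, subset_rfl, le_antisymm hS.card_le (by omega)⟩
  | succ d ih =>
    obtain ⟨j, hj, hjS, hnjS⟩ := exists_mem_polarJ_of_card_lt (show S.card < n by omega)
    obtain ⟨U, hU, hsub, hc⟩ :=
      ih (hS.insert hj hnjS) (by rw [card_insert_of_notMem hjS]; omega)
    exact ⟨U, hU, (subset_insert j S).trans hsub, hc⟩

lemma exists_card_eq {m : ℕ} (hm : m ≤ n) : ∃ X, Sing n X ∧ X.card = m := by
  obtain ⟨U, hU, -, hUc⟩ := (empty n).exists_superset_card_eq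
  obtain ⟨X, hXU, hXc⟩ := exists_subset_card_eq (hUc ▸ hm)
  exact ⟨X, hU.mono hXU, hXc⟩

lemma mem_or_neg_mem (hU : Sing n U) (hc : U.card = n) {j : ℤ} (hj : j ∈ polarJ n) :
    j ∈ U ∨ -j ∈ U := by
  by_contra! h
  have := (hU.insert hj h.2).card_le
  rw [card_insert_of_notMem h.1] at this
  omega

end Sing

section Sunflower

variable {α : Type*} [DecidableEq α] {k : ℕ} {𝒜 : Set (Finset α)}

lemma card_inter_lt_of_ne {X Y : Finset α} (hc : X.card = Y.card) (hne : X ≠ Y) :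
    (X ∩ Y).card < X.card :=
  card_lt_card <| inf_lt_left.2 fun hXY =>
    hne (eq_of_subset_of_card_le hXY hc.ge)

lemma erase_subset_of_card_inter {X Z : Finset α} {s : α} (hs : s ∈ X) (hsZ : s ∉ Z)
    (h : X.card ≤ (Z ∩ X).card + 1) : X.erase s ⊆ Z := by
  have hsub : Z ∩ X ⊆ X.erase s := fun x hx =>
    mem_erase.2 ⟨fun h => hsZ (h ▸ (mem_inter.1 hx).1), (mem_inter.1 hx).2⟩
  have heq := eq_of_subset_of_card_le hsub (by rw [card_erase_of_mem hs]; omega)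
  exact heq ▸ inter_subset_left

variable (hcard : ∀ X ∈ 𝒜, X.card = k + 1)
  (hinter : ∀ X ∈ 𝒜, ∀ Y ∈ 𝒜, X ≠ Y → (X ∩ Y).card = k)
include hcard hinter

lemma inter_eq_inter_of_not_subset {U W A : Finset α} (hW : W ∈ 𝒜) (hA : A ∈ 𝒜) (hAU : A ⊆ U)
    (hWU : ¬W ⊆ U) : W ∩ A = W ∩ U := by
  have hWA : W ≠ A := fun h => hWU (h ▸ hAU)
  have hWUc : (W ∩ U).card < W.card := card_lt_card (inf_lt_left.2 hWU)
  refine eq_of_subset_of_card_le (inter_subset_inter_left hAU) ?_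
  rw [hinter W hW A hA hWA]
  have := hcard W hW
  omega

lemma exists_common_or_subset_union {X₀ : Finset α} (hX₀ : X₀ ∈ 𝒜) :
    (∃ S : Finset α, S.card = k ∧ ∀ X ∈ 𝒜, S ⊆ X) ∨
      ∃ X ∈ 𝒜, ∃ Y ∈ 𝒜, X ≠ Y ∧ ∀ Z ∈ 𝒜, Z ⊆ X ∪ Y := by
  refine or_iff_not_imp_left.2 fun hS => ?_
  push Not at hS
  obtain ⟨Y, hY, hYX₀⟩ : ∃ Y ∈ 𝒜, Y ≠ X₀ := by
    obtain ⟨S, hSX₀, hSc⟩ := exists_subset_card_eq (s := X₀) (n := k) (by simp [hcard X₀ hX₀])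
    obtain ⟨Y, hY, hSY⟩ := hS S hSc
    exact ⟨Y, hY, by rintro rfl; exact hSY hSX₀⟩
  obtain ⟨Z, hZ, hSZ⟩ := hS (X₀ ∩ Y) (hinter X₀ hX₀ Y hY hYX₀.symm)
  have hleave : ∀ W ∈ 𝒜, ¬W ⊆ X₀ ∪ Y → W ∩ (X₀ ∪ Y) = X₀ ∩ Y := by
    intro W hW hWU
    have hWX := inter_eq_inter_of_not_subset hcard hinter hW hX₀ subset_union_left hWU
    have hWY := inter_eq_inter_of_not_subset hcard hinter hW hY subset_union_right hWU
    refine eq_of_subset_of_card_le (fun x hx => ?_) ?_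
    · rw [← hWX] at hx
      have hxY : x ∈ W ∩ Y := hWY ▸ hWX ▸ hx
      exact mem_inter.2 ⟨(mem_inter.1 hx).2, (mem_inter.1 hxY).2⟩
    · rw [← hWX, hinter W hW X₀ hX₀ fun h => hWU (h ▸ subset_union_left),
        hinter X₀ hX₀ Y hY hYX₀.symm]
  have hZU : Z ⊆ X₀ ∪ Y := fun z hz => by
    by_contra hzU
    exact hSZ (hleave Z hZ (fun h => hzU (h hz)) ▸ inter_subset_left)
  refine ⟨X₀, hX₀, Y, hY, hYX₀.symm, fun W hW => by_contra fun hWU => hSZ ?_⟩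
  rw [← hleave W hW hWU, ← inter_eq_inter_of_not_subset hcard hinter hW hZ hZU hWU]
  exact inter_subset_right

end Sunflower

def polarStar (k : ℕ) (S U : Finset ℤ) : Set (Finset ℤ) :=
  {X | S ⊆ X ∧ X ⊆ U ∧ X.card = k + 1}

def polarTop (k : ℕ) (U : Finset ℤ) : Set (Finset ℤ) :=
  {X | X ⊆ U ∧ X.card = k + 1}

section Cliques

variable {n k : ℕ} {C D : Set (Finset ℤ)} {S U : Finset ℤ}

lemma IsCliqueF.card_eq (hC : IsCliqueF n k C) {X : Finset ℤ} (hX : X ∈ C) : X.card = k + 1 :=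
  (hC.1 X hX).2

lemma IsCliqueF.card_inter (hC : IsCliqueF n k C) {X Y : Finset ℤ} (hX : X ∈ C) (hY : Y ∈ C)
    (hXY : X ≠ Y) : (X ∩ Y).card = k :=
  (hC.2 X hX Y hY hXY).1

lemma isCliqueF_singleton {X : Finset ℤ} (hX : Sing n X) (hXc : X.card = k + 1) :
    IsCliqueF n k {X} :=
  ⟨fun _ hY => hY ▸ ⟨hX, hXc⟩, fun _ hY _ hZ hYZ => absurd (hY.trans hZ.symm) hYZ⟩

lemma isCliqueF_of_forall_subset (hU : Sing n U) (hC : ∀ X ∈ C, X ⊆ U ∧ X.card = k + 1)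
    (hinter : ∀ X ∈ C, ∀ Y ∈ C, X ≠ Y → k ≤ (X ∩ Y).card) : IsCliqueF n k C := by
  refine ⟨fun X hX => ⟨hU.mono (hC X hX).1, (hC X hX).2⟩, fun X hX Y hY hXY => ⟨?_, ?_⟩⟩
  · have := card_inter_lt_of_ne ((hC X hX).2.trans (hC Y hY).2.symm) hXY
    have := hinter X hX Y hY hXY
    have := (hC X hX).2
    omega
  · exact hU.mono (union_subset (hC X hX).1 (hC Y hY).1)

lemma isCliqueF_polarStar (hU : Sing n U) (hS : S.card = k) :
    IsCliqueF n k (polarStar k S U) :=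
  isCliqueF_of_forall_subset hU (fun _ hX => hX.2) fun _ hX _ hY _ =>
    hS ▸ card_le_card (subset_inter hX.1 hY.1)

lemma isCliqueF_polarTop (hU : Sing n U) (hUc : U.card = k + 2) :
    IsCliqueF n k (polarTop k U) :=
  isCliqueF_of_forall_subset hU (fun _ hX => hX) fun X hX Y hY _ => by
    have := card_union_add_card_inter X Y
    have := card_le_card (union_subset hX.1 hY.1)
    rw [hX.2, hY.2] at *
    omega

lemma IsCliqueF.exists_sing_superset (hC : IsCliqueF n k C) :
    ∃ W, Sing n W ∧ ∀ X ∈ C, X ⊆ W := by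
  classical
  refine ⟨(polarJ n).filter fun j => ∃ X ∈ C, j ∈ X, ⟨filter_subset _ _, ?_⟩, ?_⟩
  · intro i hi hni
    obtain ⟨-, X, hX, hiX⟩ := (mem_filter.1 hi)
    obtain ⟨-, Y, hY, hiY⟩ := (mem_filter.1 hni)
    by_cases hXY : X = Y
    · exact (hC.1 X hX).1.2 i hiX (hXY ▸ hiY)
    · exact (hC.2 X hX Y hY hXY).2.2 i (mem_union_left _ hiX) (mem_union_right _ hiY)
  · exact fun X hX j hj => mem_filter.2 ⟨(hC.1 X hX).1.1 hj, X, hX, hj⟩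

lemma polarStar_maximal (hk : k + 3 ≤ n) (hU : Sing n U) (hSU : S ⊆ U) (hS : S.card = k)
    (hUc : U.card = n) (hD : IsCliqueF n k D) (hsub : polarStar k S U ⊆ D) :
    polarStar k S U = D := by
  have hmem : ∀ u ∈ U \ S, insert u S ∈ D := fun u hu =>
    hsub ⟨subset_insert u S, insert_subset (mem_sdiff.1 hu).1 hSU,
      by rw [card_insert_of_notMem (mem_sdiff.1 hu).2, hS]⟩
  refine Set.Subset.antisymm hsub fun Z hZ => ?_
  obtain ⟨hZs, hZc⟩ := hD.1 Z hZ
  have hSZ : S ⊆ Z := by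
    intro s hs
    by_contra hsZ
    have hcover : ∀ u ∈ U \ S, (insert u S).erase s ⊆ Z := fun u hu =>
      erase_subset_of_card_inter (mem_insert_of_mem hs) hsZ <| by
        have hne : Z ≠ insert u S := fun h => hsZ (h ▸ mem_insert_of_mem hs)
        rw [hD.card_inter hZ (hmem u hu) hne, card_insert_of_notMem (mem_sdiff.1 hu).2, hS]
    obtain ⟨u₀, hu₀⟩ : (U \ S).Nonempty := by
      rw [← card_pos, card_sdiff_of_subset hSU]
      omega
    have hUZ : U.erase s ⊆ Z := fun x hx => by
      obtain ⟨hxs, hxU⟩ := mem_erase.1 hx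
      by_cases hxS : x ∈ S
      · exact hcover u₀ hu₀ (mem_erase.2 ⟨hxs, mem_insert_of_mem hxS⟩)
      · exact hcover x (mem_sdiff.2 ⟨hxU, hxS⟩) (mem_erase.2 ⟨hxs, mem_insert_self x S⟩)
    have := card_le_card hUZ
    rw [card_erase_of_mem (hSU hs)] at this
    omega
  have hZU : Z ⊆ U := by
    intro z hz
    by_contra hzU
    have hnz : -z ∈ U \ S :=
      mem_sdiff.2 ⟨(hU.mem_or_neg_mem hUc (hZs.1 hz)).resolve_left hzU,
        fun h => hZs.2 z hz (hSZ h)⟩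
    have hne : Z ≠ insert (-z) S := fun h =>
      hzU (insert_subset (mem_sdiff.1 hnz).1 hSU (h ▸ hz))
    exact (hD.2 Z hZ _ (hmem _ hnz) hne).2.2 z (mem_union_left _ hz)
      (mem_union_right _ (mem_insert_self _ _))
  exact ⟨hSZ, hZU, hZc⟩

lemma polarTop_maximal (hk : 1 ≤ k) (hUc : U.card = k + 2)
    (hD : IsCliqueF n k D) (hsub : polarTop k U ⊆ D) : polarTop k U = D := by
  refine Set.Subset.antisymm hsub fun Z hZ => ⟨by_contra fun hZU => ?_, hD.card_eq hZ⟩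
  have hUx : ∀ x ∈ U, U.erase x ∈ D := fun x hx =>
    hsub ⟨erase_subset x U, by rw [card_erase_of_mem hx, hUc]; rfl⟩
  have heq : ∀ x ∈ U, Z ∩ U.erase x = Z ∩ U := fun x hx =>
    inter_eq_inter_of_not_subset (fun _ => hD.card_eq) (fun _ hX _ hY => hD.card_inter hX hY)
      hZ (hUx x hx) (erase_subset x U) hZU
  have hZU₀ : Z ∩ U = ∅ := eq_empty_of_forall_notMem fun x hx => by
    rw [← heq x (mem_inter.1 hx).2] at hx
    simp at hx
  obtain ⟨x, hx⟩ : U.Nonempty := card_pos.1 (by omega)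
  have := hD.card_inter hZ (hUx x hx) fun h => hZU (h ▸ erase_subset x U)
  rw [heq x hx, hZU₀, card_empty] at this
  omega

end Cliques

lemma IsMaxCliqueF.eq_polarStar_or_eq_polarTop {n k : ℕ} {C : Set (Finset ℤ)} (hk : k + 1 ≤ n)
    (h : IsMaxCliqueF n k C) :
    (∃ S U, Sing n U ∧ S ⊆ U ∧ S.card = k ∧ U.card = n ∧ C = polarStar k S U) ∨
      ∃ U, Sing n U ∧ U.card = k + 2 ∧ C = polarTop k U := by
  obtain ⟨hC, hmax⟩ := h
  obtain ⟨X₀, hX₀⟩ : C.Nonempty := by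
    obtain ⟨X, hX, hXc⟩ := Sing.exists_card_eq hk
    refine Set.nonempty_iff_ne_empty.2 fun hCe => ?_
    have := hmax {X} (isCliqueF_singleton hX hXc) (hCe ▸ Set.empty_subset _)
    simp [hCe] at this
  rcases exists_common_or_subset_union (fun _ => hC.card_eq)
      (fun _ hX _ hY => hC.card_inter hX hY) hX₀ with
    ⟨S, hSc, hS⟩ | ⟨X, hX, Y, hY, hXY, hXYU⟩
  · obtain ⟨W, hW, hCW⟩ := hC.exists_sing_superset
    obtain ⟨U, hU, hWU, hUc⟩ := hW.exists_superset_card_eq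
    have hCU : ∀ X ∈ C, X ⊆ U := fun X hX => (hCW X hX).trans hWU
    refine .inl ⟨S, U, hU, (hS X₀ hX₀).trans (hCU X₀ hX₀), hSc, hUc,
      hmax _ (isCliqueF_polarStar hU hSc) fun X hX => ⟨hS X hX, hCU X hX, hC.card_eq hX⟩⟩
  · obtain ⟨hXYc, hXYs⟩ := hC.2 X hX Y hY hXY
    have hUc : (X ∪ Y).card = k + 2 := by
      have := card_union_add_card_inter X Y
      rw [hC.card_eq hX, hC.card_eq hY, hXYc] at this
      omega
    exact .inr ⟨X ∪ Y, hXYs, hUc,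
      hmax _ (isCliqueF_polarTop hXYs hUc) fun Z hZ => ⟨hXYU Z hZ, hC.card_eq hZ⟩⟩

/-- For 1 ≤ k ≤ n-3, the maximal cliques of Γ_k(n) are exactly the stars and the tops. -/
theorem stmt11 (n k : ℕ) (hk1 : 1 ≤ k) (hk2 : k + 3 ≤ n) (C : Set (Finset ℤ)) :
    IsMaxCliqueF n k C ↔
      ((∃ S U : Finset ℤ, Sing n U ∧ S ⊆ U ∧ S.card = k ∧ U.card = n ∧
          C = {X : Finset ℤ | S ⊆ X ∧ X ⊆ U ∧ X.card = k + 1}) ∨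
       (∃ U : Finset ℤ, Sing n U ∧ U.card = k + 2 ∧
          C = {X : Finset ℤ | X ⊆ U ∧ X.card = k + 1})) := by
  refine ⟨IsMaxCliqueF.eq_polarStar_or_eq_polarTop (by omega), ?_⟩
  rintro (⟨S, U, hU, hSU, hS, hUc, rfl⟩ | ⟨U, hU, hUc, rfl⟩)
  · exact ⟨isCliqueF_polarStar hU hS, fun D hD => polarStar_maximal hk2 hU hSU hS hUc hD⟩
  · exact ⟨isCliqueF_polarTop hU hUc, fun D hD => polarTop_maximal hk1 hUc hD⟩
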